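/- (Rank stabilization.) Suppose the full-horizon KKT conditions hold for some ω ∈ ℝ^r with ω ≠ 0 and some costates λ ∈ (ℝ^n)^T. Let 1 ≤ t ≤ t+l−1 < T and suppose A_{t+l} ∈ ℝ^{n×n} is invertible. If rank H(t,l) = r+n−1, then rank H(t,l+1) = r+n−1. -/

import Mathlib

open Matrix

noncomputable section

variable {n m r : ℕ}

/-- Block upper bidiagonal matrix `F_x(t,l)` (0-based block indices): diagonal blocks are
`I_n`, and block `(i, i+1)` is `-(A (t+i))ᵀ`. -/
def Fx (A : ℕ → Matrix (Fin n) (Fin n) ℝ) (t l : ℕ) :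
    Matrix (Fin l × Fin n) (Fin l × Fin n) ℝ :=
  fun ip jq =>
    if ip.1 = jq.1 then (if ip.2 = jq.2 then (1 : ℝ) else 0)
    else if (jq.1 : ℕ) = (ip.1 : ℕ) + 1 then -((A (t + (ip.1 : ℕ)))ᵀ ip.2 jq.2)
    else 0

/-- Block diagonal matrix `F_u(t,l)` with diagonal blocks `(B (t+i))ᵀ`. -/
def Fu (B : ℕ → Matrix (Fin n) (Fin m) ℝ) (t l : ℕ) :
    Matrix (Fin l × Fin m) (Fin l × Fin n) ℝ :=
  fun ip jq => if ip.1 = jq.1 then (B (t + (ip.1 : ℕ)))ᵀ ip.2 jq.2 else 0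

/-- Vertical stack `Φ_x(t,l)` of the blocks `(G (t+i))ᵀ`. -/
def Phix (G : ℕ → Matrix (Fin r) (Fin n) ℝ) (t l : ℕ) :
    Matrix (Fin l × Fin n) (Fin r) ℝ :=
  fun ip q => (G (t + (ip.1 : ℕ)))ᵀ ip.2 q

/-- Vertical stack `Φ_u(t,l)` of the blocks `(D (t+i))ᵀ`. -/
def Phiu (D : ℕ → Matrix (Fin r) (Fin m) ℝ) (t l : ℕ) :
    Matrix (Fin l × Fin m) (Fin r) ℝ :=
  fun ip q => (D (t + (ip.1 : ℕ)))ᵀ ip.2 q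

/-- `V(t,l)`: all `n×n` blocks zero except the last one, which is `(A (t+l-1))ᵀ`. -/
def Vm (A : ℕ → Matrix (Fin n) (Fin n) ℝ) (t l : ℕ) :
    Matrix (Fin l × Fin n) (Fin n) ℝ :=
  fun ip q => if (ip.1 : ℕ) = l - 1 then (A (t + l - 1))ᵀ ip.2 q else 0

/-- `H₁(t,l) = F_u(t,l) · F_x(t,l)⁻¹ · Φ_x(t,l) + Φ_u(t,l)`. -/
def H1m (A : ℕ → Matrix (Fin n) (Fin n) ℝ) (B : ℕ → Matrix (Fin n) (Fin m) ℝ)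
    (G : ℕ → Matrix (Fin r) (Fin n) ℝ) (D : ℕ → Matrix (Fin r) (Fin m) ℝ) (t l : ℕ) :
    Matrix (Fin l × Fin m) (Fin r) ℝ :=
  Fu B t l * (Fx A t l)⁻¹ * Phix G t l + Phiu D t l

/-- `H₂(t,l) = F_u(t,l) · F_x(t,l)⁻¹ · V(t,l)`. -/
def H2m (A : ℕ → Matrix (Fin n) (Fin n) ℝ) (B : ℕ → Matrix (Fin n) (Fin m) ℝ) (t l : ℕ) :
    Matrix (Fin l × Fin m) (Fin n) ℝ :=
  Fu B t l * (Fx A t l)⁻¹ * Vm A t l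

/-- The recovery matrix `H(t,l) = [H₁(t,l)  H₂(t,l)]`. -/
def Hm (A : ℕ → Matrix (Fin n) (Fin n) ℝ) (B : ℕ → Matrix (Fin n) (Fin m) ℝ)
    (G : ℕ → Matrix (Fin r) (Fin n) ℝ) (D : ℕ → Matrix (Fin r) (Fin m) ℝ) (t l : ℕ) :
    Matrix (Fin l × Fin m) (Fin r ⊕ Fin n) ℝ :=
  fromCols (H1m A B G D t l) (H2m A B t l)

/-- Stack the vectors `lam t, lam (t+1), …, lam (t+l-1)` into a vector in `ℝ^{nl}`. -/
def stackVec (lam : ℕ → Fin n → ℝ) (t l : ℕ) : Fin l × Fin n → ℝ :=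
  fun ip => lam (t + (ip.1 : ℕ)) ip.2

/-- Full-horizon KKT conditions for the weight vector `ω` with costates `lam 1, …, lam T`. -/
def KKT (A : ℕ → Matrix (Fin n) (Fin n) ℝ) (B : ℕ → Matrix (Fin n) (Fin m) ℝ)
    (G : ℕ → Matrix (Fin r) (Fin n) ℝ) (D : ℕ → Matrix (Fin r) (Fin m) ℝ) (T : ℕ)
    (ω : Fin r → ℝ) (lam : ℕ → Fin n → ℝ) : Prop :=
  -(Fx A 1 T *ᵥ stackVec lam 1 T) + Phix G 1 T *ᵥ ω = 0 ∧
    Fu B 1 T *ᵥ stackVec lam 1 T + Phiu D 1 T *ᵥ ω = 0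

/-- The natural identification of `ℝ^{(l+1)·ι}`-indices with `ℝ^{l·ι} × ℝ^{ι}`-indices. -/
def splitIdx (l : ℕ) (ι : Type*) : Fin (l + 1) × ι → (Fin l × ι) ⊕ ι :=
  fun ip => if h : (ip.1 : ℕ) < l then Sum.inl (⟨ip.1, h⟩, ip.2) else Sum.inr ip.2

/-! Everything goes through the window system: `H(t, l) (a, b) = F_u y + Φ_u a`, where `y` solves
`F_x y = Φ_x a + V b` (`F_x` is block unitriangular, so `y` exists and is unique).

From above: the KKT costates `λ_t, …, λ_{t+l}` solve the window system of length `l + 1` with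
input `(ω, λ_{t+l+1})`, where `λ_{T+1} := 0`; stationarity then makes `(ω, λ_{t+l+1}) ≠ 0` a kernel
vector of `H(t, l+1)`.

From below: in the window system of length `l + 1` with input `(a, b)`, the last block gives
`y_{l+1} = G_{t+l}ᵀ a + A_{t+l}ᵀ b`, and the first `l` blocks solve the system of length `l` with
input `(a, y_{l+1})`. So the first `l` block rows of `H(t, l+1)` are
`H(t, l) · [[I, 0], [G_{t+l}ᵀ, A_{t+l}ᵀ]]`, and this block matrix is invertible with `A_{t+l}`. -/

theorem Fin.sum_ite_val_eq {M : Type*} [AddCommMonoid M] {l : ℕ} (k : ℕ) (f : Fin l → M) :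
    (∑ j : Fin l, if (j : ℕ) = k then f j else 0) = if h : k < l then f ⟨k, h⟩ else 0 := by
  split_ifs with h
  · simp [← Fin.ext_iff (b := ⟨k, h⟩)]
  · exact Finset.sum_eq_zero fun j _ => if_neg (by omega)

section

variable {A : ℕ → Matrix (Fin n) (Fin n) ℝ} {B : ℕ → Matrix (Fin n) (Fin m) ℝ}
  {G : ℕ → Matrix (Fin r) (Fin n) ℝ} {D : ℕ → Matrix (Fin r) (Fin m) ℝ} {t l : ℕ}

theorem Fx_mulVec_apply (y : Fin l × Fin n → ℝ) (i : Fin l) (p : Fin n) :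
    (Fx A t l *ᵥ y) (i, p) = y (i, p) -
      if h : (i : ℕ) + 1 < l then ((A (t + i))ᵀ *ᵥ fun q => y (⟨i + 1, h⟩, q)) p else 0 := by
  have hblock : ∀ j, ∑ q, Fx A t l (i, p) (j, q) * y (j, q) =
      (if i = j then y (j, p) else 0) -
        if (j : ℕ) = i + 1 then ((A (t + i))ᵀ *ᵥ fun q => y (j, q)) p else 0 := by
    intro j
    by_cases hij : i = j
    · subst hij; simp [Fx]
    · rcases eq_or_ne (j : ℕ) (i + 1) with h | h <;> simp [Fx, hij, h, mulVec, dotProduct]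
  simp only [mulVec, dotProduct, Fintype.sum_prod_type] at hblock ⊢
  simp only [hblock, Finset.sum_sub_distrib, Finset.sum_ite_eq, Finset.mem_univ, if_true,
    Fin.sum_ite_val_eq (f := fun j => ∑ q, (A (t + i))ᵀ p q * y (j, q))]

theorem Fu_mulVec_apply (y : Fin l × Fin n → ℝ) (i : Fin l) (p : Fin m) :
    (Fu B t l *ᵥ y) (i, p) = ((B (t + i))ᵀ *ᵥ fun q => y (i, q)) p := by
  simp [mulVec, dotProduct, Fintype.sum_prod_type, Fu, ite_mul, Finset.sum_ite_irrel]

theorem Phix_mulVec_apply (a : Fin r → ℝ) (i : Fin l) (p : Fin n) :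
    (Phix G t l *ᵥ a) (i, p) = ((G (t + i))ᵀ *ᵥ a) p := rfl

theorem Phiu_mulVec_apply (a : Fin r → ℝ) (i : Fin l) (p : Fin m) :
    (Phiu D t l *ᵥ a) (i, p) = ((D (t + i))ᵀ *ᵥ a) p := rfl

theorem Vm_mulVec_apply (b : Fin n → ℝ) (i : Fin l) (p : Fin n) :
    (Vm A t l *ᵥ b) (i, p) = if (i : ℕ) = l - 1 then ((A (t + l - 1))ᵀ *ᵥ b) p else 0 := by
  simp only [Vm, mulVec, dotProduct, ite_mul, zero_mul, Finset.sum_ite_irrel,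
    Finset.sum_const_zero]

theorem Fx_blockTriangular : (Fx A t l).BlockTriangular Prod.fst := by
  intro i j hji
  have : (j.1 : ℕ) < i.1 := hji
  simp only [Fx, if_neg (Fin.ne_of_gt hji), if_neg (show (j.1 : ℕ) ≠ i.1 + 1 by omega)]

theorem det_Fx : (Fx A t l).det = 1 := by
  rw [Fx_blockTriangular.det]
  refine Finset.prod_eq_one fun k _ => ?_
  have hblock : (Fx A t l).toSquareBlock Prod.fst k = 1 := by
    ext ⟨⟨i, p⟩, hi⟩ ⟨⟨j, q⟩, hj⟩
    obtain rfl : i = j := hi.trans hj.symm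
    simp [toSquareBlock, toSquareBlockProp, Fx, one_apply]
  rw [hblock, det_one]

theorem Hm_mulVec_sumElim {a : Fin r → ℝ} {b : Fin n → ℝ} {y : Fin l × Fin n → ℝ}
    (hy : Fx A t l *ᵥ y = Phix G t l *ᵥ a + Vm A t l *ᵥ b) :
    Hm A B G D t l *ᵥ Sum.elim a b = Fu B t l *ᵥ y + Phiu D t l *ᵥ a := by
  have hsol : (Fx A t l)⁻¹ *ᵥ (Phix G t l *ᵥ a + Vm A t l *ᵥ b) = y := by
    rw [← hy, mulVec_mulVec, nonsing_inv_mul _ (by rw [det_Fx]; exact isUnit_one), one_mulVec]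
  rw [Hm, fromCols_mulVec_sumElim, H1m, H2m, add_mulVec, ← hsol]
  simp only [← mulVec_mulVec, mulVec_add]
  abel

theorem Fx_succ_mulVec_castSucc (y : Fin (l + 1) × Fin n → ℝ) (i : Fin l) (p : Fin n) :
    (Fx A t (l + 1) *ᵥ y) (i.castSucc, p) =
      (Fx A t l *ᵥ fun jq => y (jq.1.castSucc, jq.2)) (i, p) -
        (Vm A t l *ᵥ fun q => y (Fin.last l, q)) (i, p) := by
  rw [Fx_mulVec_apply, Fx_mulVec_apply, Vm_mulVec_apply]
  rcases Nat.lt_or_ge ((i : ℕ) + 1) l with h | h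
  · rw [dif_pos (by simp), dif_pos h, if_neg (by omega), sub_zero]
    rfl
  · have hi : (i : ℕ) + 1 = l := by omega
    rw [dif_pos (by simp [hi]), dif_neg (by omega), if_pos (by omega),
      show t + l - 1 = t + i by omega]
    simp only [Fin.val_castSucc, hi, sub_zero]
    rfl

theorem Fx_succ_mulVec_last (y : Fin (l + 1) × Fin n → ℝ) (p : Fin n) :
    (Fx A t (l + 1) *ᵥ y) (Fin.last l, p) = y (Fin.last l, p) := by
  rw [Fx_mulVec_apply, dif_neg (by simp), sub_zero]

def costateStep (G : Matrix (Fin r) (Fin n) ℝ) (A : Matrix (Fin n) (Fin n) ℝ) :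
    Matrix (Fin r ⊕ Fin n) (Fin r ⊕ Fin n) ℝ :=
  fromBlocks 1 0 Gᵀ Aᵀ

theorem costateStep_mulVec_sumElim (G : Matrix (Fin r) (Fin n) ℝ) (A : Matrix (Fin n) (Fin n) ℝ)
    (a : Fin r → ℝ) (b : Fin n → ℝ) :
    costateStep G A *ᵥ Sum.elim a b = Sum.elim a (Gᵀ *ᵥ a + Aᵀ *ᵥ b) := by
  simp [costateStep, fromBlocks_mulVec]

theorem isUnit_det_costateStep {G : Matrix (Fin r) (Fin n) ℝ} {A : Matrix (Fin n) (Fin n) ℝ}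
    (hA : A.det ≠ 0) : IsUnit (costateStep G A).det := by
  rw [costateStep, det_fromBlocks_zero₁₂, det_one, one_mul, det_transpose]
  exact hA.isUnit

theorem Hm_succ_mulVec_castSucc (a : Fin r → ℝ) (b : Fin n → ℝ) (i : Fin l) (p : Fin m) :
    (Hm A B G D t (l + 1) *ᵥ Sum.elim a b) (i.castSucc, p) =
      (Hm A B G D t l *ᵥ Sum.elim a ((G (t + l))ᵀ *ᵥ a + (A (t + l))ᵀ *ᵥ b)) (i, p) := by
  set y := (Fx A t (l + 1))⁻¹ *ᵥ (Phix G t (l + 1) *ᵥ a + Vm A t (l + 1) *ᵥ b)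
  have hy : Fx A t (l + 1) *ᵥ y = Phix G t (l + 1) *ᵥ a + Vm A t (l + 1) *ᵥ b := by
    rw [mulVec_mulVec, mul_nonsing_inv _ (by rw [det_Fx]; exact isUnit_one), one_mulVec]
  have hlast : (fun q => y (Fin.last l, q)) = (G (t + l))ᵀ *ᵥ a + (A (t + l))ᵀ *ᵥ b := by
    funext q
    rw [← Fx_succ_mulVec_last (A := A) (t := t) y q, hy, Pi.add_apply, Vm_mulVec_apply,
      if_pos (by simp), show t + (l + 1) - 1 = t + l by omega]
    rfl
  have hinit : Fx A t l *ᵥ (fun jq => y (jq.1.castSucc, jq.2)) =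
      Phix G t l *ᵥ a + Vm A t l *ᵥ ((G (t + l))ᵀ *ᵥ a + (A (t + l))ᵀ *ᵥ b) := by
    funext ⟨j, q⟩
    have hrow := congrFun hy (j.castSucc, q)
    rw [Fx_succ_mulVec_castSucc, hlast, Pi.add_apply, Vm_mulVec_apply (l := l + 1),
      if_neg (by simp; omega), add_zero] at hrow
    have hPhix : (Phix G t (l + 1) *ᵥ a) (j.castSucc, q) = (Phix G t l *ᵥ a) (j, q) := rfl
    rw [Pi.add_apply]
    linarith
  rw [Hm_mulVec_sumElim hy, Hm_mulVec_sumElim hinit]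
  simp only [Pi.add_apply, Fu_mulVec_apply]
  rfl

theorem Hm_succ_submatrix_castSucc :
    (Hm A B G D t (l + 1)).submatrix (fun ip : Fin l × Fin m => (ip.1.castSucc, ip.2)) id =
      Hm A B G D t l * costateStep (G (t + l)) (A (t + l)) := by
  refine ext_iff_mulVec.mpr fun v => ?_
  obtain ⟨a, b, rfl⟩ : ∃ a b, v = Sum.elim a b :=
    ⟨v ∘ Sum.inl, v ∘ Sum.inr, (Sum.elim_comp_inl_inr v).symm⟩
  funext ⟨i, p⟩
  rw [← mulVec_mulVec, costateStep_mulVec_sumElim]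
  exact Hm_succ_mulVec_castSucc a b i p

theorem rank_Hm_le_rank_Hm_succ (hA : (A (t + l)).det ≠ 0) :
    (Hm A B G D t l).rank ≤ (Hm A B G D t (l + 1)).rank :=
  calc (Hm A B G D t l).rank
      = (Hm A B G D t l * costateStep (G (t + l)) (A (t + l))).rank :=
        (rank_mul_eq_left_of_isUnit_det _ _ (isUnit_det_costateStep hA)).symm
    _ = _ := by rw [← Hm_succ_submatrix_castSucc]
    _ ≤ _ := rank_submatrix_le _ _ _

theorem Matrix.rank_lt_card_of_mulVec_eq_zero {ι κ K : Type*} [Fintype κ] [Field K]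
    {M : Matrix ι κ K} {v : κ → K} (hv : v ≠ 0) (h : M *ᵥ v = 0) :
    M.rank < Fintype.card κ := by
  have hker : LinearMap.ker M.mulVecLin ≠ ⊥ := (Submodule.ne_bot_iff _).2 ⟨v, h, hv⟩
  have hdim := LinearMap.finrank_range_add_finrank_ker M.mulVecLin
  rw [Module.finrank_fintype_fun_eq_card] at hdim
  have hpos : Module.finrank K (LinearMap.ker M.mulVecLin) ≠ 0 :=
    fun h0 => hker (Submodule.finrank_eq_zero.mp h0)
  rw [rank]
  omega

namespace KKT

variable {T : ℕ} {ω : Fin r → ℝ} {lam : ℕ → Fin n → ℝ}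

theorem costate_eq (h : KKT A B G D T ω lam) {k : ℕ} (hk : 1 ≤ k) (hkT : k ≤ T) :
    lam k = (G k)ᵀ *ᵥ ω + (A k)ᵀ *ᵥ (if k < T then lam (k + 1) else 0) := by
  funext p
  have hrow := congrFun h.1 (⟨k - 1, by omega⟩, p)
  rw [Pi.add_apply, Pi.neg_apply, Fx_mulVec_apply, Phix_mulVec_apply, Pi.zero_apply] at hrow
  simp only [stackVec, show 1 + (k - 1) = k by omega, show 1 + (k - 1 + 1) = k + 1 by omega]
    at hrow
  by_cases hnext : k < T
  · rw [dif_pos (by omega)] at hrow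
    rw [if_pos hnext, Pi.add_apply]
    linarith
  · rw [dif_neg (by omega)] at hrow
    rw [if_neg hnext, mulVec_zero, add_zero]
    linarith

theorem stationarity (h : KKT A B G D T ω lam) {k : ℕ} (hk : 1 ≤ k) (hkT : k ≤ T) :
    (B k)ᵀ *ᵥ lam k + (D k)ᵀ *ᵥ ω = 0 := by
  funext p
  have hrow := congrFun h.2 (⟨k - 1, by omega⟩, p)
  simpa [Fu_mulVec_apply, Phiu_mulVec_apply, stackVec, show 1 + (k - 1) = k by omega] using hrow

theorem Fx_mulVec_stackVec (h : KKT A B G D T ω lam) (ht : 1 ≤ t) (htl : t + l ≤ T) :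
    Fx A t (l + 1) *ᵥ stackVec lam t (l + 1) =
      Phix G t (l + 1) *ᵥ ω + Vm A t (l + 1) *ᵥ (if t + l < T then lam (t + l + 1) else 0) := by
  funext ⟨i, p⟩
  have hcost := congrFun (h.costate_eq (k := t + i) (by omega) (by omega)) p
  rw [Fx_mulVec_apply, Pi.add_apply, Phix_mulVec_apply, Vm_mulVec_apply]
  by_cases hi : (i : ℕ) < l
  · rw [if_pos (by omega)] at hcost
    rw [dif_pos (by omega), if_neg (by omega), add_zero, sub_eq_iff_eq_add]
    exact hcost
  · have hil : (i : ℕ) = l := by omega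
    rw [dif_neg (by omega), if_pos (by omega), sub_zero, show t + (l + 1) - 1 = t + l by omega]
    simp only [stackVec, hil] at hcost ⊢
    exact hcost

theorem Hm_mulVec_eq_zero (h : KKT A B G D T ω lam) (ht : 1 ≤ t) (htl : t + l ≤ T) :
    Hm A B G D t (l + 1) *ᵥ Sum.elim ω (if t + l < T then lam (t + l + 1) else 0) = 0 := by
  rw [Hm_mulVec_sumElim (h.Fx_mulVec_stackVec ht htl)]
  funext ⟨i, p⟩
  rw [Pi.add_apply, Fu_mulVec_apply, Phiu_mulVec_apply]
  exact congrFun (h.stationarity (k := t + i) (by omega) (by omega)) p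

end KKT

end

theorem recovery_matrix_rank_stabilization_general (n m r T : ℕ)
    (A : ℕ → Matrix (Fin n) (Fin n) ℝ) (B : ℕ → Matrix (Fin n) (Fin m) ℝ)
    (G : ℕ → Matrix (Fin r) (Fin n) ℝ) (D : ℕ → Matrix (Fin r) (Fin m) ℝ)
    (ω : Fin r → ℝ) (hω : ω ≠ 0)
    (lam : ℕ → Fin n → ℝ) (hKKT : KKT A B G D T ω lam)
    (t l : ℕ) (ht : 1 ≤ t) (htl : t + l - 1 < T)
    (hdet : (A (t + l)).det ≠ 0)
    (hrank : (Hm A B G D t l).rank = r + n - 1) :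
    (Hm A B G D t (l + 1)).rank = r + n - 1 := by
  have hkernel : Sum.elim ω (if t + l < T then lam (t + l + 1) else 0) ≠ 0 :=
    fun h0 => hω (funext fun q => congrFun h0 (Sum.inl q))
  have hupper := rank_lt_card_of_mulVec_eq_zero hkernel (hKKT.Hm_mulVec_eq_zero ht (by omega))
  have hlower := rank_Hm_le_rank_Hm_succ (B := B) (G := G) (D := D) hdet
  rw [Fintype.card_sum, Fintype.card_fin, Fintype.card_fin] at hupper
  omega

/-- Rank stabilization: under the full-horizon KKT conditions for some nonzero `ω`, if
`A_{t+l}` is invertible and `rank H(t,l) = r+n−1`, then `rank H(t,l+1) = r+n−1`. -/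
theorem recovery_matrix_rank_stabilization (n m r T : ℕ) (hn : 0 < n) (hm : 0 < m) (hr : 0 < r) (hT : 1 ≤ T)
    (A : ℕ → Matrix (Fin n) (Fin n) ℝ) (B : ℕ → Matrix (Fin n) (Fin m) ℝ)
    (G : ℕ → Matrix (Fin r) (Fin n) ℝ) (D : ℕ → Matrix (Fin r) (Fin m) ℝ)
    (hAT : A T = 1)
    (ω : Fin r → ℝ) (hω : ω ≠ 0)
    (lam : ℕ → Fin n → ℝ) (hKKT : KKT A B G D T ω lam)
    (t l : ℕ) (ht : 1 ≤ t) (hl : 1 ≤ l) (htl : t + l - 1 < T)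
    (hdet : (A (t + l)).det ≠ 0)
    (hrank : (Hm A B G D t l).rank = r + n - 1) :
    (Hm A B G D t (l + 1)).rank = r + n - 1 :=
  recovery_matrix_rank_stabilization_general n m r T A B G D ω hω lam hKKT t l ht htl hdet hrank
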